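/- Let ⊢ be positive propositional logic possibly extended by additional axioms, and let j be a nucleus on ⊢. The deduction rule R→ (from Γ, φ ⊢ ψ infer Γ ⊢ φ → ψ) is compatible with j (i.e., holds for ⊢_j defined by Γ ⊢_j φ iff Γ ⊢ jφ) if and only if φ → jψ ⊢ j(φ → ψ) for all formulas φ, ψ. -/

import Mathlib

/-- A single-conclusion entailment relation on `S`. -/
structure IsEntailment {S : Type*} [DecidableEq S] (E : Finset S → S → Prop) : Prop where
  refl : ∀ (U : Finset S) (a : S), a ∈ U → E U a
  mono : ∀ (U U' : Finset S) (a : S), E U a → E (U ∪ U') a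
  cut : ∀ (V V' : Finset S) (a b : S), E V b → E (insert b V') a → E (V ∪ V') a

/-- A nucleus over an entailment relation. -/
structure IsNucleus {S : Type*} [DecidableEq S] (E : Finset S → S → Prop) (j : S → S) : Prop where
  lj : ∀ (U : Finset S) (a b : S), E (insert a U) (j b) → E (insert (j a) U) (j b)
  rj : ∀ (U : Finset S) (b : S), E U b → E U (j b)

/-- Propositional formulas over countably many atoms. -/
inductive Fml where
  | atom : ℕ → Fml
  | top : Fml
  | bot : Fml
  | and : Fml → Fml → Fml
  | or : Fml → Fml → Fml
  | imp : Fml → Fml → Fml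
  | neg : Fml → Fml
deriving DecidableEq

/-- Generators of positive propositional logic: an entailment relation closed
under the deduction rule R→ and the standard axioms for ∧, ∨, →, ⊤. -/
structure PosGen (E : Finset Fml → Fml → Prop) : Prop where
  ent : IsEntailment E
  rimp : ∀ (Γ : Finset Fml) (φ ψ : Fml), E (insert φ Γ) ψ → E Γ (φ.imp ψ)
  andI : ∀ φ ψ : Fml, E {φ, ψ} (φ.and ψ)
  andE1 : ∀ φ ψ : Fml, E {φ.and ψ} φ
  andE2 : ∀ φ ψ : Fml, E {φ.and ψ} ψ
  orI1 : ∀ φ ψ : Fml, E {φ} (φ.or ψ)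
  orI2 : ∀ φ ψ : Fml, E {ψ} (φ.or ψ)
  orE : ∀ φ ψ δ : Fml, E {φ.or ψ, φ.imp δ, ψ.imp δ} δ
  mp : ∀ φ ψ : Fml, E {φ, φ.imp ψ} ψ
  topI : E ∅ Fml.top

/-- Generators of minimal logic: positive logic plus `¬φ ≈ φ → ⊥`. -/
structure MinGen (E : Finset Fml → Fml → Prop) extends PosGen E : Prop where
  pc1 : ∀ φ : Fml, E {φ.imp .bot} φ.neg
  pc2 : ∀ φ : Fml, E {φ.neg} (φ.imp .bot)

/-- Generators of intuitionistic logic: minimal logic plus ex falso quodlibet. -/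
structure IntGen (E : Finset Fml → Fml → Prop) extends MinGen E : Prop where
  efq : ∀ φ : Fml, E {Fml.bot} φ

/-- Generators of classical logic: intuitionistic logic plus reductio ad absurdum. -/
structure ClGen (E : Finset Fml → Fml → Prop) extends IntGen E : Prop where
  raa : ∀ φ : Fml, E {φ.neg.neg} φ

/-- Minimal propositional logic `⊢_m`. -/
def MinD (Γ : Finset Fml) (φ : Fml) : Prop :=
  ∀ E : Finset Fml → Fml → Prop, MinGen E → E Γ φ

/-- Intuitionistic propositional logic `⊢_i`. -/
def IntD (Γ : Finset Fml) (φ : Fml) : Prop :=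
  ∀ E : Finset Fml → Fml → Prop, IntGen E → E Γ φ

/-- Classical propositional logic `⊢_c`. -/
def ClD (Γ : Finset Fml) (φ : Fml) : Prop :=
  ∀ E : Finset Fml → Fml → Prop, ClGen E → E Γ φ

/-- Positive logic extended by additional axioms `Ax`. -/
def PosExtD (Ax : Set (Finset Fml × Fml)) (Γ : Finset Fml) (φ : Fml) : Prop :=
  ∀ E : Finset Fml → Fml → Prop, PosGen E → (∀ p ∈ Ax, E p.1 p.2) → E Γ φ

theorem IsEntailment.cut_singleton {S : Type*} [DecidableEq S] {E : Finset S → S → Prop}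
    (hE : IsEntailment E) {Γ : Finset S} {a b : S} (hb : E Γ b) (ha : E {b} a) : E Γ a := by
  simpa using hE.cut Γ ∅ a b hb ha

theorem posGen_posExtD (Ax : Set (Finset Fml × Fml)) : PosGen (PosExtD Ax) where
  ent :=
    { refl := fun U a ha _ hE _ => hE.ent.refl U a ha
      mono := fun U U' a h E hE hAx => hE.ent.mono U U' a (h E hE hAx)
      cut := fun V V' a b hb ha E hE hAx => hE.ent.cut V V' a b (hb E hE hAx) (ha E hE hAx) }
  rimp := fun Γ φ ψ h E hE hAx => hE.rimp Γ φ ψ (h E hE hAx)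
  andI := fun φ ψ _ hE _ => hE.andI φ ψ
  andE1 := fun φ ψ _ hE _ => hE.andE1 φ ψ
  andE2 := fun φ ψ _ hE _ => hE.andE2 φ ψ
  orI1 := fun φ ψ _ hE _ => hE.orI1 φ ψ
  orI2 := fun φ ψ _ hE _ => hE.orI2 φ ψ
  orE := fun φ ψ δ _ hE _ => hE.orE φ ψ δ
  mp := fun φ ψ _ hE _ => hE.mp φ ψ
  topI := fun _ hE _ => hE.topI

theorem rimp_compatible_iff_general (Ax : Set (Finset Fml × Fml)) (j : Fml → Fml) :
    (∀ (Γ : Finset Fml) (φ ψ : Fml),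
        PosExtD Ax (insert φ Γ) (j ψ) → PosExtD Ax Γ (j (φ.imp ψ))) ↔
      (∀ φ ψ : Fml, PosExtD Ax {φ.imp (j ψ)} (j (φ.imp ψ))) := by
  have hD := posGen_posExtD Ax
  refine ⟨fun compat φ ψ => compat _ φ ψ (hD.mp φ (j ψ)), fun h Γ φ ψ hΓ => ?_⟩
  exact hD.ent.cut_singleton (hD.rimp Γ φ (j ψ) hΓ) (h φ ψ)

/-- for `⊢` positive logic plus additional axioms and a nucleus
`j` on `⊢`, the rule R→ is compatible with `j` iff `φ → jψ ⊢ j(φ → ψ)`. -/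
theorem rimp_compatible_iff (Ax : Set (Finset Fml × Fml)) (j : Fml → Fml)
    (hj : IsNucleus (PosExtD Ax) j) :
    (∀ (Γ : Finset Fml) (φ ψ : Fml),
        PosExtD Ax (insert φ Γ) (j ψ) → PosExtD Ax Γ (j (φ.imp ψ))) ↔
      (∀ φ ψ : Fml, PosExtD Ax {φ.imp (j ψ)} (j (φ.imp ψ))) :=
  rimp_compatible_iff_general Ax j
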